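/- arXiv:1810.12460 — 2 statements merged into one kernel-verified Lean document; each statement's English description precedes it below -/
import Mathlib

section
/- Suppose X* is the unique matrix with rank(X*) = r* satisfying H̃ᵢⱼ(xᵢⱼ) ≤ 0 for all (i,j) ∈ Ω (i.e., all observed entries lie within their quantization bounds). Let G(X, λ) = rank(X) + λ·Σ_{(i,j)∈Ω} H̃ᵢⱼ(xᵢⱼ). If X̃ has rank(X̃) > r* and λ ≤ 4/(g²|Ω| + ε) for some ε > 0, then G(X̃, λ) > G(X*, λ). -/
theorem higher_rank_not_minimizer
    (p q : ℕ) (Ω : Finset (Fin p × Fin q)) (g : ℝ) (hg : 0 < g)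
    (mq : Fin p → Fin q → ℝ)
    (Ht : Fin p → Fin q → ℝ → ℝ)
    (hHt : ∀ i j x, Ht i j x =
      (if |x - mq i j| ≤ g / 2 then (x - mq i j) ^ 2 else g * (|x - mq i j| - g / 4))
        - g ^ 2 / 4)
    (G : Matrix (Fin p) (Fin q) ℝ → ℝ → ℝ)
    (hG : ∀ X lam, G X lam = (X.rank : ℝ) + lam * ∑ ij ∈ Ω, Ht ij.1 ij.2 (X ij.1 ij.2))
    (Xstar : Matrix (Fin p) (Fin q) ℝ) (rstar : ℕ)
    (hfeas : ∀ ij ∈ Ω, Ht ij.1 ij.2 (Xstar ij.1 ij.2) ≤ 0)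
    (hrstar : Xstar.rank = rstar)
    (huniq : ∀ Y : Matrix (Fin p) (Fin q) ℝ,
      (∀ ij ∈ Ω, Ht ij.1 ij.2 (Y ij.1 ij.2) ≤ 0) → Y.rank = rstar → Y = Xstar)
    (Xt : Matrix (Fin p) (Fin q) ℝ) (hXt : rstar < Xt.rank)
    (lam ε : ℝ) (hε : 0 < ε) (hlam0 : 0 ≤ lam)
    (hlam : lam ≤ 4 / (g ^ 2 * (Ω.card : ℝ) + ε)) :
    G Xstar lam < G Xt lam := by
  have hlb : ∀ i j x, -(g ^ 2 / 4) ≤ Ht i j x := by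
    intro i j x
    rw [hHt]
    have h2 : (0:ℝ) ≤ (x - mq i j) ^ 2 := sq_nonneg _
    split_ifs with h
    · linarith
    · push_neg at h
      have : g * (g / 2 - g / 4) ≤ g * (|x - mq i j| - g / 4) := by
        apply mul_le_mul_of_nonneg_left _ hg.le
        linarith
      nlinarith
  -- sum bounds
  have hsum1 : ∑ ij ∈ Ω, Ht ij.1 ij.2 (Xstar ij.1 ij.2) ≤ 0 :=
    Finset.sum_nonpos hfeas
  have hsum2 : -(g ^ 2 / 4) * (Ω.card : ℝ) ≤ ∑ ij ∈ Ω, Ht ij.1 ij.2 (Xt ij.1 ij.2) := by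
    calc -(g ^ 2 / 4) * (Ω.card : ℝ) = ∑ _ij ∈ Ω, -(g ^ 2 / 4) := by
          rw [Finset.sum_const, nsmul_eq_mul]; ring
      _ ≤ _ := Finset.sum_le_sum (fun ij _ => hlb ij.1 ij.2 _)
  have hcard : (0:ℝ) ≤ g ^ 2 * (Ω.card : ℝ) := by positivity
  have hpos : 0 < g ^ 2 * (Ω.card : ℝ) + ε := by linarith
  have hlamg : lam * (g ^ 2 * (Ω.card : ℝ)) < 4 := by
    have h1 : lam * (g ^ 2 * (Ω.card : ℝ)) ≤
        4 / (g ^ 2 * (Ω.card : ℝ) + ε) * (g ^ 2 * (Ω.card : ℝ)) :=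
      mul_le_mul_of_nonneg_right hlam hcard
    have h2 : 4 / (g ^ 2 * (Ω.card : ℝ) + ε) * (g ^ 2 * (Ω.card : ℝ)) < 4 := by
      rw [div_mul_eq_mul_div, div_lt_iff₀ hpos]
      nlinarith
    linarith
  have hrank : (rstar : ℝ) + 1 ≤ (Xt.rank : ℝ) := by
    exact_mod_cast Nat.succ_le_of_lt hXt
  rw [hG, hG, hrstar]
  have hA : (rstar : ℝ) + lam * ∑ ij ∈ Ω, Ht ij.1 ij.2 (Xstar ij.1 ij.2) ≤ (rstar : ℝ) := by
    nlinarith [mul_nonneg hlam0 (neg_nonneg.mpr hsum1)]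
  have hB : (rstar : ℝ) < (Xt.rank : ℝ) + lam * ∑ ij ∈ Ω, Ht ij.1 ij.2 (Xt ij.1 ij.2) := by
    have := mul_le_mul_of_nonneg_left hsum2 hlam0
    nlinarith
  linarith
end

section
/- Under Assumptions 1–3 (uniqueness of feasible minimum-rank X* with rank r*, Δ > (|Ω|-1)g²/4, and r*/(Δ - (|Ω|-1)g²/4) ≤ 4/(g²|Ω| + ε)), for every λ with r*/(Δ - (|Ω|-1)g²/4) ≤ λ ≤ 4/(g²|Ω| + ε), the set of global minimizers of G(X,λ) = rank(X) + λ·Σ_{(i,j)∈Ω} H̃ᵢⱼ(xᵢⱼ) is exactly {X*}. -/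
private lemma hub_ge {g m x : ℝ} (hg : 0 < g) :
    -(g ^ 2 / 4) ≤
      (if |x - m| ≤ g / 2 then (x - m) ^ 2 else g * (|x - m| - g / 4)) - g ^ 2 / 4 := by
  split_ifs with h
  · nlinarith [sq_nonneg (x - m)]
  · push_neg at h
    nlinarith [abs_nonneg (x - m)]

private lemma hub_pos {g m x : ℝ} (hg : 0 < g) (h : g / 2 < |x - m|) :
    0 < (if |x - m| ≤ g / 2 then (x - m) ^ 2 else g * (|x - m| - g / 4)) - g ^ 2 / 4 := by
  rw [if_neg (not_le.mpr h)]
  nlinarith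

private lemma hub_bound {g m x : ℝ} (hg : 0 < g)
    (h : (if |x - m| ≤ g / 2 then (x - m) ^ 2 else g * (|x - m| - g / 4)) - g ^ 2 / 4 = 0) :
    |x - m| = g / 2 := by
  rcases lt_trichotomy (|x - m|) (g / 2) with hlt | he | hgt
  · rw [if_pos hlt.le] at h
    nlinarith [sq_abs (x - m), abs_nonneg (x - m)]
  · exact he
  · rw [if_neg (not_le.mpr hgt)] at h
    nlinarith

private lemma hub_cont (g m : ℝ) :
    Continuous fun x : ℝ =>
      (if |x - m| ≤ g / 2 then (x - m) ^ 2 else g * (|x - m| - g / 4)) - g ^ 2 / 4 := by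
  apply Continuous.sub _ continuous_const
  apply Continuous.if_le
  · fun_prop
  · fun_prop
  · fun_prop
  · exact continuous_const
  · intro x hx
    rw [← sq_abs, hx]
    ring

private lemma matrix_rank_smul {p q : ℕ} (A : Matrix (Fin p) (Fin q) ℝ) {t : ℝ} (ht : t ≠ 0) :
    (t • A).rank = A.rank := by
  have h : (t • A).mulVecLin = t • A.mulVecLin := by
    ext v i
    simp [Matrix.mulVecLin_apply, Matrix.smul_mulVec]
  rw [Matrix.rank, Matrix.rank, h, LinearMap.range_smul _ _ ht]

private lemma matrix_eq_zero_of_rank_eq_zero {p q : ℕ} {A : Matrix (Fin p) (Fin q) ℝ}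
    (h : A.rank = 0) : A = 0 := by
  have hr : LinearMap.range A.mulVecLin = ⊥ := Submodule.finrank_eq_zero.mp h
  have h0 : A.mulVecLin = 0 := LinearMap.range_eq_bot.mp hr
  ext i j
  have := congrFun (congrFun (congrArg Matrix.mulVec (rfl : A = A)) (Pi.single j 1)) i
  have h1 : A.mulVec (Pi.single j 1) = 0 := by
    rw [← Matrix.mulVecLin_apply, h0]; rfl
  have h2 := congrFun h1 i
  simpa [Matrix.mulVec_single] using h2

set_option maxHeartbeats 2000000 in
theorem global_minimizers_singleton
    (p q : ℕ) (Ω : Finset (Fin p × Fin q)) (g : ℝ) (hg : 0 < g)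
    (mq : Fin p → Fin q → ℝ)
    (Ht : Fin p → Fin q → ℝ → ℝ)
    (hHt : ∀ i j x, Ht i j x =
      (if |x - mq i j| ≤ g / 2 then (x - mq i j) ^ 2 else g * (|x - mq i j| - g / 4))
        - g ^ 2 / 4)
    (G : Matrix (Fin p) (Fin q) ℝ → ℝ → ℝ)
    (hG : ∀ X lam, G X lam = (X.rank : ℝ) + lam * ∑ ij ∈ Ω, Ht ij.1 ij.2 (X ij.1 ij.2))
    (Xstar : Matrix (Fin p) (Fin q) ℝ) (rstar : ℕ)
    (hfeas : ∀ ij ∈ Ω, Ht ij.1 ij.2 (Xstar ij.1 ij.2) ≤ 0)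
    (hrstar : Xstar.rank = rstar)
    (hminrank : ∀ Y : Matrix (Fin p) (Fin q) ℝ,
      (∀ ij ∈ Ω, Ht ij.1 ij.2 (Y ij.1 ij.2) ≤ 0) → rstar ≤ Y.rank)
    (huniq : ∀ Y : Matrix (Fin p) (Fin q) ℝ,
      (∀ ij ∈ Ω, Ht ij.1 ij.2 (Y ij.1 ij.2) ≤ 0) → Y.rank = rstar → Y = Xstar)
    (Δ : ℝ)
    (hΔ1 : ∀ Y : Matrix (Fin p) (Fin q) ℝ, Y.rank < rstar →
      ∃ ij ∈ Ω, Δ ≤ Ht ij.1 ij.2 (Y ij.1 ij.2))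
    (hΔ2 : ∀ Y : Matrix (Fin p) (Fin q) ℝ, Y.rank = rstar →
      (∃ ij ∈ Ω, 0 < Ht ij.1 ij.2 (Y ij.1 ij.2)) →
      ∃ ij ∈ Ω, Δ ≤ Ht ij.1 ij.2 (Y ij.1 ij.2))
    (ε : ℝ) (hε : 0 < ε)
    (hAss2 : ((Ω.card : ℝ) - 1) * g ^ 2 / 4 < Δ)
    (hAss3 : (rstar : ℝ) / (Δ - ((Ω.card : ℝ) - 1) * g ^ 2 / 4)
      ≤ 4 / (g ^ 2 * (Ω.card : ℝ) + ε)) :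
    ∀ lam : ℝ,
      (rstar : ℝ) / (Δ - ((Ω.card : ℝ) - 1) * g ^ 2 / 4) ≤ lam →
      lam ≤ 4 / (g ^ 2 * (Ω.card : ℝ) + ε) →
      {X : Matrix (Fin p) (Fin q) ℝ | ∀ Y, G X lam ≤ G Y lam} = {Xstar} := by
  intro lam hlam1 hlam2
  set N : ℝ := (Ω.card : ℝ) with hN
  have hN0 : 0 ≤ N := Nat.cast_nonneg _
  have hΔc : 0 < Δ - (N - 1) * g ^ 2 / 4 := by linarith
  have hlam0 : 0 ≤ lam := le_trans (div_nonneg (Nat.cast_nonneg _) hΔc.le) hlam1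
  have hlamr : (rstar : ℝ) ≤ lam * (Δ - (N - 1) * g ^ 2 / 4) := by
    rw [div_le_iff₀ hΔc] at hlam1; linarith
  have hden : 0 < g ^ 2 * N + ε := by positivity
  have hlamN : lam * (N * (g ^ 2 / 4)) < 1 := by
    have h1 : lam * (N * (g ^ 2 / 4)) ≤ (4 / (g ^ 2 * N + ε)) * (N * (g ^ 2 / 4)) :=
      mul_le_mul_of_nonneg_right hlam2 (by positivity)
    have h2 : (4 / (g ^ 2 * N + ε)) * (N * (g ^ 2 / 4)) < 1 := by
      rw [div_mul_eq_mul_div, div_lt_one hden]; linarith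
    linarith
  have hHt_ge : ∀ (i : Fin p) (j : Fin q) (x : ℝ), -(g ^ 2 / 4) ≤ Ht i j x := by
    intro i j x; rw [hHt]; exact hub_ge hg
  have hsum_ge : ∀ X : Matrix (Fin p) (Fin q) ℝ,
      -(N * (g ^ 2 / 4)) ≤ ∑ ij ∈ Ω, Ht ij.1 ij.2 (X ij.1 ij.2) := by
    intro X
    calc -(N * (g ^ 2 / 4)) = ∑ _ij ∈ Ω, -(g ^ 2 / 4) := by
          rw [Finset.sum_const, nsmul_eq_mul]; ring
      _ ≤ _ := Finset.sum_le_sum fun ij _ => hHt_ge _ _ _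
  have hsum_Δ : ∀ X : Matrix (Fin p) (Fin q) ℝ,
      (∃ ij ∈ Ω, Δ ≤ Ht ij.1 ij.2 (X ij.1 ij.2)) →
      Δ - (N - 1) * g ^ 2 / 4 ≤ ∑ ij ∈ Ω, Ht ij.1 ij.2 (X ij.1 ij.2) := by
    rintro X ⟨ij0, hij0, hΔle⟩
    rw [← Finset.add_sum_erase Ω _ hij0]
    have hcard : ((Ω.erase ij0).card : ℝ) = N - 1 := by
      rw [Finset.card_erase_of_mem hij0]
      have h1 : 1 ≤ Ω.card := Finset.card_pos.mpr ⟨ij0, hij0⟩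
      rw [Nat.cast_sub h1, Nat.cast_one]
    have h2 : ∑ ij ∈ Ω.erase ij0, -(g ^ 2 / 4) ≤
        ∑ ij ∈ Ω.erase ij0, Ht ij.1 ij.2 (X ij.1 ij.2) :=
      Finset.sum_le_sum fun ij _ => hHt_ge _ _ _
    rw [Finset.sum_const, nsmul_eq_mul, hcard] at h2
    linarith
  have hSX_le : ∑ ij ∈ Ω, Ht ij.1 ij.2 (Xstar ij.1 ij.2) ≤ 0 :=
    Finset.sum_nonpos fun ij hij => hfeas ij hij
  have hGX : G Xstar lam ≤ (rstar : ℝ) := by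
    rw [hG, hrstar]
    linarith [mul_nonneg hlam0 (neg_nonneg.mpr hSX_le)]
  -- X* is a global minimizer
  have hmain : ∀ Y : Matrix (Fin p) (Fin q) ℝ, G Xstar lam ≤ G Y lam := by
    intro Y
    rw [hG Y]
    by_cases hfY : ∀ ij ∈ Ω, Ht ij.1 ij.2 (Y ij.1 ij.2) ≤ 0
    · have hr := hminrank Y hfY
      rcases eq_or_lt_of_le hr with hre | hgt
      · rw [huniq Y hfY hre.symm, ← hG]
      · have hr1 : (rstar : ℝ) + 1 ≤ (Y.rank : ℝ) := by exact_mod_cast hgt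
        linarith [hGX, hlamN, mul_le_mul_of_nonneg_left (hsum_ge Y) hlam0]
    · push_neg at hfY
      obtain ⟨ij0, hij0, hpos⟩ := hfY
      rcases lt_trichotomy Y.rank rstar with hlt | heq | hgt
      · have hS := hsum_Δ Y (hΔ1 Y hlt)
        have h1 : lam * (Δ - (N - 1) * g ^ 2 / 4) ≤
            lam * ∑ ij ∈ Ω, Ht ij.1 ij.2 (Y ij.1 ij.2) :=
          mul_le_mul_of_nonneg_left hS hlam0
        have h0 : (0 : ℝ) ≤ (Y.rank : ℝ) := Nat.cast_nonneg _
        linarith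
      · have hS := hsum_Δ Y (hΔ2 Y heq ⟨ij0, hij0, hpos⟩)
        have h1 : lam * (Δ - (N - 1) * g ^ 2 / 4) ≤
            lam * ∑ ij ∈ Ω, Ht ij.1 ij.2 (Y ij.1 ij.2) :=
          mul_le_mul_of_nonneg_left hS hlam0
        have h0 : 0 ≤ lam * (Δ - (N - 1) * g ^ 2 / 4) := mul_nonneg hlam0 hΔc.le
        have hre : (Y.rank : ℝ) = (rstar : ℝ) := by exact_mod_cast heq
        linarith
      · have hr1 : (rstar : ℝ) + 1 ≤ (Y.rank : ℝ) := by exact_mod_cast hgt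
        linarith [hGX, hlamN, mul_le_mul_of_nonneg_left (hsum_ge Y) hlam0]
  -- any minimizer equals X*
  have huniq2 : ∀ Y : Matrix (Fin p) (Fin q) ℝ, (∀ Z, G Y lam ≤ G Z lam) → Y = Xstar := by
    intro Y hY
    have hYX : G Y lam ≤ (rstar : ℝ) := le_trans (hY Xstar) hGX
    rw [hG] at hYX
    by_cases hfY : ∀ ij ∈ Ω, Ht ij.1 ij.2 (Y ij.1 ij.2) ≤ 0
    · have hr := hminrank Y hfY
      rcases eq_or_lt_of_le hr with hre | hgt
      · exact huniq Y hfY hre.symm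
      · exfalso
        have hr1 : (rstar : ℝ) + 1 ≤ (Y.rank : ℝ) := by exact_mod_cast hgt
        linarith [hlamN, mul_le_mul_of_nonneg_left (hsum_ge Y) hlam0]
    · push_neg at hfY
      obtain ⟨ij0, hij0, hpos⟩ := hfY
      have hN1 : (1 : ℝ) ≤ N := by
        have h1 : 1 ≤ Ω.card := Finset.card_pos.mpr ⟨ij0, hij0⟩
        rw [hN]
        exact_mod_cast h1
      rcases lt_trichotomy Y.rank rstar with hlt | heq | hgt
      · -- the hard case
        exfalso
        have hrs1 : 1 ≤ rstar := Nat.one_le_iff_ne_zero.mpr (by omega)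
        have hrs1' : (1 : ℝ) ≤ (rstar : ℝ) := by exact_mod_cast hrs1
        have hlpos : 0 < lam :=
          lt_of_lt_of_le (div_pos (by linarith) hΔc) hlam1
        have hS := hsum_Δ Y (hΔ1 Y hlt)
        have hlamS : (rstar : ℝ) ≤ lam * ∑ ij ∈ Ω, Ht ij.1 ij.2 (Y ij.1 ij.2) :=
          le_trans hlamr (mul_le_mul_of_nonneg_left hS hlam0)
        have hSXnp : lam * ∑ ij ∈ Ω, Ht ij.1 ij.2 (Xstar ij.1 ij.2) ≤ 0 := by
          linarith [mul_nonneg hlam0 (neg_nonneg.mpr hSX_le)]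
        have hrY0 : Y.rank = 0 := by
          by_contra h
          have h1 : (1 : ℝ) ≤ (Y.rank : ℝ) := by
            exact_mod_cast Nat.one_le_iff_ne_zero.mpr h
          linarith
        have hY0 : Y = 0 := matrix_eq_zero_of_rank_eq_zero hrY0
        have hrY0' : ((Y.rank : ℝ)) = 0 := by rw [hrY0]; norm_num
        have hSX0 : ∑ ij ∈ Ω, Ht ij.1 ij.2 (Xstar ij.1 ij.2) = 0 := by
          have hYX2 : G Y lam ≤ G Xstar lam := hY Xstar
          rw [hG, hG, hrstar] at hYX2
          have h2 : 0 ≤ lam * ∑ ij ∈ Ω, Ht ij.1 ij.2 (Xstar ij.1 ij.2) := by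
            rw [hrY0'] at hYX2; linarith
          have h3 : 0 ≤ ∑ ij ∈ Ω, Ht ij.1 ij.2 (Xstar ij.1 ij.2) := by
            by_contra hneg
            push_neg at hneg
            have h4 := mul_neg_of_pos_of_neg hlpos hneg
            linarith
          linarith
        have hXb : ∀ ij ∈ Ω, Ht ij.1 ij.2 (Xstar ij.1 ij.2) = 0 :=
          (Finset.sum_eq_zero_iff_of_nonpos hfeas).mp hSX0
        have hSYpos : 0 < ∑ ij ∈ Ω, Ht ij.1 ij.2 (Y ij.1 ij.2) :=
          lt_of_lt_of_le hΔc hS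
        have hbd : ∀ ij ∈ Ω, |Xstar ij.1 ij.2 - mq ij.1 ij.2| = g / 2 := by
          intro ij hij
          have h0 := hXb ij hij
          rw [hHt] at h0
          exact hub_bound hg h0
        by_cases hall : ∀ ij ∈ Ω, Xstar ij.1 ij.2 = 0
        · have hSY0 : ∑ ij ∈ Ω, Ht ij.1 ij.2 (Y ij.1 ij.2) = 0 := by
            apply Finset.sum_eq_zero
            intro ij hij
            have hYe : Y ij.1 ij.2 = 0 := by rw [hY0]; rfl
            rw [hYe]
            conv_lhs => rw [← hall ij hij]
            exact hXb ij hij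
          linarith
        · push_neg at hall
          obtain ⟨ij0', hij0', hx0⟩ := hall
          have hb0 : |Xstar ij0'.1 ij0'.2 - mq ij0'.1 ij0'.2| = g / 2 := hbd ij0' hij0'
          set x0 := Xstar ij0'.1 ij0'.2 with hx0def
          set m0 := mq ij0'.1 ij0'.2 with hm0def
          have hxm : x0 - m0 ≠ 0 := by
            intro h
            rw [h, abs_zero] at hb0
            linarith
          have hΔpos : 0 < Δ := by
            have hNg : 0 ≤ (N - 1) * g ^ 2 := mul_nonneg (by linarith) (sq_nonneg g)
            linarith
          have hev : ∀ᶠ t in nhds (1 : ℝ),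
              ∀ ij ∈ Ω, Ht ij.1 ij.2 (t * Xstar ij.1 ij.2) < Δ := by
            rw [Filter.eventually_all_finset]
            intro ij hij
            have hc : Continuous fun t : ℝ => Ht ij.1 ij.2 (t * Xstar ij.1 ij.2) := by
              have he : (fun t : ℝ => Ht ij.1 ij.2 (t * Xstar ij.1 ij.2)) =
                  (fun y : ℝ =>
                    (if |y - mq ij.1 ij.2| ≤ g / 2 then (y - mq ij.1 ij.2) ^ 2
                      else g * (|y - mq ij.1 ij.2| - g / 4)) - g ^ 2 / 4) ∘
                    (fun t : ℝ => t * Xstar ij.1 ij.2) :=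
                funext fun t => hHt _ _ _
              rw [he]
              exact (hub_cont g (mq ij.1 ij.2)).comp (by fun_prop)
            have h1 : Ht ij.1 ij.2 ((1 : ℝ) * Xstar ij.1 ij.2) < Δ := by
              rw [one_mul, hXb ij hij]; exact hΔpos
            exact hc.continuousAt.eventually_lt continuousAt_const h1
          rw [Metric.eventually_nhds_iff] at hev
          obtain ⟨δ, hδpos, hδ⟩ := hev
          set s : ℝ := min δ 1 / 2 with hs
          have hspos : 0 < s := by positivity
          have hsδ : s < δ := by
            have h1 := min_le_left δ 1
            have := lt_min hδpos one_pos
            simp only [hs]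
            linarith [min_le_left δ (1:ℝ)]
          have hs1 : s ≤ 1 / 2 := by
            simp only [hs]
            linarith [min_le_right δ (1:ℝ)]
          set σ : ℝ := if 0 < x0 * (x0 - m0) then 1 else -1 with hσdef
          have hσ : σ * (x0 * (x0 - m0)) = |x0 * (x0 - m0)| := by
            rw [hσdef]
            rcases lt_trichotomy 0 (x0 * (x0 - m0)) with h | h | h
            · rw [if_pos h, abs_of_pos h, one_mul]
            · exact absurd h.symm (mul_ne_zero hx0 hxm)
            · rw [if_neg (by linarith), abs_of_neg h]; ring
          have hσabs : |σ| = 1 := by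
            rw [hσdef]; split_ifs <;> simp
          set t : ℝ := 1 + s * σ with htdef
          have hts : |t - 1| = s := by
            rw [htdef]
            have : (1 : ℝ) + s * σ - 1 = s * σ := by ring
            rw [this, abs_mul, hσabs, mul_one, abs_of_pos hspos]
          have ht1 : |t - 1| < δ := by rw [hts]; exact hsδ
          have ht0 : t ≠ 0 := by
            have h1 := abs_le.mp hts.le
            intro h
            rw [h] at h1
            have := h1.1
            linarith
          have hrZ : (t • Xstar).rank = rstar := by
            rw [matrix_rank_smul Xstar ht0, hrstar]
          have hx0pos : 0 < Ht ij0'.1 ij0'.2 ((t • Xstar) ij0'.1 ij0'.2) := by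
            have hentry : (t • Xstar) ij0'.1 ij0'.2 = t * x0 := rfl
            rw [hentry, hHt]
            apply hub_pos hg
            have hsq : (t * x0 - m0) ^ 2 =
                (x0 - m0) ^ 2 + 2 * s * (σ * (x0 * (x0 - m0))) + (s * σ * x0) ^ 2 := by
              rw [htdef]; ring
            have h1 : (x0 - m0) ^ 2 = (g / 2) ^ 2 := by
              rw [← sq_abs, hb0]
            have h2 : 0 < |x0 * (x0 - m0)| := abs_pos.mpr (mul_ne_zero hx0 hxm)
            have h3 : (g / 2) ^ 2 < (t * x0 - m0) ^ 2 := by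
              rw [hsq, h1, hσ]
              linarith [sq_nonneg (s * σ * x0), mul_pos hspos h2]
            exact lt_of_pow_lt_pow_left₀ 2 (abs_nonneg _) (by rw [sq_abs]; exact h3)
          obtain ⟨ij1, hij1, hΔ1'⟩ := hΔ2 (t • Xstar) hrZ ⟨ij0', hij0', hx0pos⟩
          have hlt' := hδ (show dist t 1 < δ by rwa [Real.dist_eq]) ij1 hij1
          have hentry1 : (t • Xstar) ij1.1 ij1.2 = t * Xstar ij1.1 ij1.2 := rfl
          rw [hentry1] at hΔ1'
          linarith
      · -- rank Y = rstar, infeasible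
        have hS := hsum_Δ Y (hΔ2 Y heq ⟨ij0, hij0, hpos⟩)
        have hre : (Y.rank : ℝ) = (rstar : ℝ) := by exact_mod_cast heq
        rcases eq_or_lt_of_le hlam0 with hl0 | hlpos
        · have hr0 : rstar = 0 := by
            by_contra h
            have h1 : (0 : ℝ) < (rstar : ℝ) := by
              exact_mod_cast Nat.pos_of_ne_zero h
            have h2 := div_pos h1 hΔc
            rw [← hl0] at hlam1
            linarith
          have hY0 : Y = 0 := matrix_eq_zero_of_rank_eq_zero (by rw [heq, hr0])
          have hX0 : Xstar = 0 := matrix_eq_zero_of_rank_eq_zero (by rw [hrstar, hr0])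
          rw [hY0, hX0]
        · exfalso
          have h1 : lam * (Δ - (N - 1) * g ^ 2 / 4) ≤
              lam * ∑ ij ∈ Ω, Ht ij.1 ij.2 (Y ij.1 ij.2) :=
            mul_le_mul_of_nonneg_left hS hlam0
          have h2 : 0 < lam * (Δ - (N - 1) * g ^ 2 / 4) := mul_pos hlpos hΔc
          linarith
      · exfalso
        have hr1 : (rstar : ℝ) + 1 ≤ (Y.rank : ℝ) := by exact_mod_cast hgt
        linarith [hlamN, mul_le_mul_of_nonneg_left (hsum_ge Y) hlam0]
  ext X
  simp only [Set.mem_setOf_eq, Set.mem_singleton_iff]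
  constructor
  · exact fun h => huniq2 X h
  · rintro rfl
    exact hmain
end
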